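/- Let M be an MDP and q, q' states of M with q ≼ q' (q' simulates q). Then for every liveness formula ψ_L of the liveness fragment of PCTL, if q satisfies ψ_L then q' satisfies ψ_L; and for every safety formula ψ_S of the safety fragment, if q' satisfies ψ_S then q satisfies ψ_S. -/

import Mathlib

open Classical
attribute [local instance 10] Classical.propDecidable

noncomputable section

universe u v w

/-- A sub-probability measure on a finite set `Q`. -/
structure SubProb (Q : Type u) [Fintype Q] where
  val : Q → ℝ
  nonneg : ∀ q, 0 ≤ val q
  sum_le_one : ∑ q, val q ≤ 1

namespace SubProb

variable {Q : Type u} {Q' : Type v} [Fintype Q] [Fintype Q']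

/-- The measure of a set of states. -/
def mass (μ : SubProb Q) (A : Set Q) : ℝ := ∑ q, A.indicator μ.val q

/-- The zero sub-probability measure. -/
def zero (Q : Type u) [Fintype Q] : SubProb Q :=
  ⟨fun _ => 0, fun _ => le_refl 0, by simp⟩

/-- Extension (by zero) of a sub-probability measure to a disjoint sum (left). -/
def toLeft (μ : SubProb Q) : SubProb (Q ⊕ Q') where
  val := Sum.elim μ.val fun _ => 0
  nonneg := by rintro (q | q); exacts [μ.nonneg q, le_refl 0]
  sum_le_one := by simpa [Fintype.sum_sum_type] using μ.sum_le_one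

/-- Extension (by zero) of a sub-probability measure to a disjoint sum (right). -/
def toRight (μ : SubProb Q') : SubProb (Q ⊕ Q') where
  val := Sum.elim (fun _ => 0) μ.val
  nonneg := by rintro (q | q); exacts [le_refl 0, μ.nonneg q]
  sum_le_one := by simpa [Fintype.sum_sum_type] using μ.sum_le_one

end SubProb

/-- The image of a set under a binary relation. -/
def relImage {A : Type u} {B : Type v} (R : A → B → Prop) (S : Set A) : Set B :=
  {b | ∃ a ∈ S, R a b}

/-- A set is `R`-closed if its image under `R` is itself. -/
def RClosed {Q : Type u} (R : Q → Q → Prop) (A : Set Q) : Prop := relImage R A = A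

/-- `μ ≼_R μ'` : `μ'` simulates `μ` with respect to `R`. -/
def SubProb.simLE {Q : Type u} [Fintype Q] (R : Q → Q → Prop) (μ μ' : SubProb Q) : Prop :=
  ∀ A : Set Q, RClosed R A → μ.mass A ≤ μ'.mass A

/-- `μ ≈_R μ'` : `μ` is equivalent to `μ'` with respect to `R`. -/
def SubProb.simEq {Q : Type u} [Fintype Q] (R : Q → Q → Prop) (μ μ' : SubProb Q) : Prop :=
  ∀ A : Set Q, RClosed R A → μ.mass A = μ'.mass A

/-- A (finite) Markov decision process over atomic propositions `AP`. -/
structure MDP (Q : Type u) [Fintype Q] (AP : Type w) where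
  init : Q
  trans : Q → Finset (SubProb Q)
  trans_nonempty : ∀ q, (trans q).Nonempty
  label : Q → Set AP

variable {Q : Type u} {Q' : Type v} {AP : Type w} [Fintype Q] [Fintype Q']

/-- A simulation relation on (the state space of) an MDP: a preorder such that related
states have the same labels and every transition of the smaller state is simulated. -/
def IsSimulation (M : MDP Q AP) (R : Q → Q → Prop) : Prop :=
  Reflexive R ∧ Transitive R ∧
    ∀ q q', R q q' → M.label q = M.label q' ∧
      ∀ μ ∈ M.trans q, ∃ μ' ∈ M.trans q', SubProb.simLE R μ μ'

/-- A bisimulation on (the state space of) an MDP. -/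
def IsBisimulation (M : MDP Q AP) (R : Q → Q → Prop) : Prop :=
  Equivalence R ∧
    ∀ q q', R q q' → M.label q = M.label q' ∧
      ∀ μ ∈ M.trans q, ∃ μ' ∈ M.trans q', SubProb.simEq R μ μ'

/-- The direct sum of two MDPs (with the initial state of the first as initial state). -/
def MDP.dsum (M : MDP Q AP) (M' : MDP Q' AP) : MDP (Q ⊕ Q') AP where
  init := Sum.inl M.init
  trans := fun x =>
    match x with
    | .inl q => (M.trans q).image SubProb.toLeft
    | .inr q => (M'.trans q).image SubProb.toRight
  trans_nonempty := by
    rintro (q | q)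
    · exact (M.trans_nonempty q).image _
    · exact (M'.trans_nonempty q).image _
  label := Sum.elim M.label M'.label

/-- `M ≼ M'` : the MDP `M'` simulates the MDP `M`. -/
def MDP.Sim (M : MDP Q AP) (M' : MDP Q' AP) : Prop :=
  ∃ R : (Q ⊕ Q') → (Q ⊕ Q') → Prop,
    IsSimulation (M.dsum M') R ∧ R (Sum.inl M.init) (Sum.inr M'.init)

/-- `M ≈ M'` : the MDPs `M` and `M'` are bisimilar. -/
def MDP.Bisim (M : MDP Q AP) (M' : MDP Q' AP) : Prop :=
  ∃ R : (Q ⊕ Q') → (Q ⊕ Q') → Prop,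
    IsBisimulation (M.dsum M') R ∧ R (Sum.inl M.init) (Sum.inr M'.init)

/-- The canonical-form relation `id_Q ∪ R₁ ∪ id_{Q'}` on a disjoint sum. -/
def canonRel (R₁ : Q → Q' → Prop) : (Q ⊕ Q') → (Q ⊕ Q') → Prop
  | .inl a, .inl b => a = b
  | .inl a, .inr b => R₁ a b
  | .inr _, .inl _ => False
  | .inr a, .inr b => a = b

/-- `R₁ ⊆ Q × Q'` is a canonical simulation of `M` by `M'`. -/
def IsCanonSim (M : MDP Q AP) (M' : MDP Q' AP) (R₁ : Q → Q' → Prop) : Prop :=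
  IsSimulation (M.dsum M') (canonRel R₁)

/-- The edge relation of the unlabeled underlying graph of an MDP. -/
def MDP.edge (M : MDP Q AP) (q₁ q₂ : Q) : Prop :=
  ∃ μ ∈ M.trans q₁, 0 < μ.val q₂

/-- A sub-probability measure on `Q` viewed as a measure on `Q × Fin (k+1)`
concentrated on level `j`. -/
def SubProb.toLevel {k : ℕ} (μ : SubProb Q) (j : Fin (k + 1)) : SubProb (Q × Fin (k + 1)) where
  val := fun x => if x.2 = j then μ.val x.1 else 0
  nonneg := by
    intro x; split
    · exact μ.nonneg x.1
    · exact le_refl 0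
  sum_le_one := by
    rw [Fintype.sum_prod_type]
    simpa using μ.sum_le_one

/-- The `k`-th unrolling of an MDP rooted at `q`. States at level `j+1` transition to the
corresponding states at level `j`; states at level `0` have only the zero transition. -/
def MDP.unroll (M : MDP Q AP) (q : Q) (k : ℕ) : MDP (Q × Fin (k + 1)) AP where
  init := (q, Fin.last k)
  trans := fun x =>
    if h : (x.2 : ℕ) = 0 then {SubProb.zero _}
    else (M.trans x.1).image fun μ =>
      μ.toLevel ⟨(x.2 : ℕ) - 1, Nat.lt_of_le_of_lt (Nat.sub_le _ _) x.2.isLt⟩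
  trans_nonempty := by
    intro x; split
    · simp
    · exact (M.trans_nonempty x.1).image _
  label := fun x => M.label x.1
mutual
/-- The safety fragment of PCTL. -/
inductive SafeF (AP : Type w) : Type w
  | tt : SafeF AP
  | ff : SafeF AP
  | atom : AP → SafeF AP
  | natom : AP → SafeF AP
  | and : SafeF AP → SafeF AP → SafeF AP
  | or : SafeF AP → SafeF AP → SafeF AP
  | pnextLt : (p : ℚ) → 0 ≤ p → p ≤ 1 → LiveF AP → SafeF AP
  | pnextLe : (p : ℚ) → 0 ≤ p → p ≤ 1 → LiveF AP → SafeF AP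
  | puntilLt : (p : ℚ) → 0 ≤ p → p ≤ 1 → LiveF AP → LiveF AP → SafeF AP
  | puntilLe : (p : ℚ) → 0 ≤ p → p ≤ 1 → LiveF AP → LiveF AP → SafeF AP

/-- The liveness fragment of PCTL. -/
inductive LiveF (AP : Type w) : Type w
  | tt : LiveF AP
  | ff : LiveF AP
  | atom : AP → LiveF AP
  | natom : AP → LiveF AP
  | and : LiveF AP → LiveF AP → LiveF AP
  | or : LiveF AP → LiveF AP → LiveF AP
  | nnextLt : (p : ℚ) → 0 ≤ p → p ≤ 1 → LiveF AP → LiveF AP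
  | nnextLe : (p : ℚ) → 0 ≤ p → p ≤ 1 → LiveF AP → LiveF AP
  | nuntilLt : (p : ℚ) → 0 ≤ p → p ≤ 1 → LiveF AP → LiveF AP → LiveF AP
  | nuntilLe : (p : ℚ) → 0 ≤ p → p ≤ 1 → LiveF AP → LiveF AP → LiveF AP
end

/-- A (history-dependent) scheduler for an MDP. -/
structure Sched (M : MDP Q AP) where
  choice : List Q → Q → SubProb Q
  valid : ∀ h q, choice h q ∈ M.trans q

/-- The probability, under scheduler `σ` with current history `h`, that an until property
`s1 U s2` is satisfied from `q` within `n` steps. -/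
def untilProbN (M : MDP Q AP) (σ : Sched M) (s1 s2 : Set Q) : ℕ → List Q → Q → ℝ
  | 0, _, q => if q ∈ s2 then 1 else 0
  | n + 1, h, q =>
    if q ∈ s2 then 1
    else if q ∈ s1 then
      ∑ q', (σ.choice h q).val q' * untilProbN M σ s1 s2 n (h ++ [q]) q'
    else 0

/-- The probability under scheduler `σ` that `s1 U s2` is satisfied from `q`. -/
def untilProb (M : MDP Q AP) (σ : Sched M) (s1 s2 : Set Q) (q : Q) : ℝ :=
  ⨆ n : ℕ, untilProbN M σ s1 s2 n [] q

mutual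
/-- Satisfaction of safety formulas at a state of an MDP (under all schedulers). -/
def satS (M : MDP Q AP) : SafeF AP → Q → Prop
  | .tt, _ => True
  | .ff, _ => False
  | .atom a, q => a ∈ M.label q
  | .natom a, q => a ∉ M.label q
  | .and φ ψ, q => satS M φ q ∧ satS M ψ q
  | .or φ ψ, q => satS M φ q ∨ satS M ψ q
  | .pnextLt p _ _ ψ, q => ∀ μ ∈ M.trans q, μ.mass {q' | satL M ψ q'} < (p : ℝ)
  | .pnextLe p _ _ ψ, q => ∀ μ ∈ M.trans q, μ.mass {q' | satL M ψ q'} ≤ (p : ℝ)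
  | .puntilLt p _ _ ψ1 ψ2, q =>
    ∀ σ : Sched M, untilProb M σ {q' | satL M ψ1 q'} {q' | satL M ψ2 q'} q < (p : ℝ)
  | .puntilLe p _ _ ψ1 ψ2, q =>
    ∀ σ : Sched M, untilProb M σ {q' | satL M ψ1 q'} {q' | satL M ψ2 q'} q ≤ (p : ℝ)

/-- Satisfaction of liveness formulas at a state of an MDP. -/
def satL (M : MDP Q AP) : LiveF AP → Q → Prop
  | .tt, _ => True
  | .ff, _ => False
  | .atom a, q => a ∈ M.label q
  | .natom a, q => a ∉ M.label q
  | .and φ ψ, q => satL M φ q ∧ satL M ψ q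
  | .or φ ψ, q => satL M φ q ∨ satL M ψ q
  | .nnextLt p _ _ ψ, q => ¬ ∀ μ ∈ M.trans q, μ.mass {q' | satL M ψ q'} < (p : ℝ)
  | .nnextLe p _ _ ψ, q => ¬ ∀ μ ∈ M.trans q, μ.mass {q' | satL M ψ q'} ≤ (p : ℝ)
  | .nuntilLt p _ _ ψ1 ψ2, q =>
    ¬ ∀ σ : Sched M, untilProb M σ {q' | satL M ψ1 q'} {q' | satL M ψ2 q'} q < (p : ℝ)
  | .nuntilLe p _ _ ψ1 ψ2, q =>
    ¬ ∀ σ : Sched M, untilProb M σ {q' | satL M ψ1 q'} {q' | satL M ψ2 q'} q ≤ (p : ℝ)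
end
mutual
/-- Weak safety formulas: safety formulas using only `≤` probability bounds. -/
def SafeF.weak : SafeF AP → Prop
  | .tt => True
  | .ff => True
  | .atom _ => True
  | .natom _ => True
  | .and φ ψ => φ.weak ∧ ψ.weak
  | .or φ ψ => φ.weak ∧ ψ.weak
  | .pnextLt _ _ _ _ => False
  | .pnextLe _ _ _ ψ => ψ.strict
  | .puntilLt _ _ _ _ _ => False
  | .puntilLe _ _ _ ψ1 ψ2 => ψ1.strict ∧ ψ2.strict

/-- Strict liveness formulas: liveness formulas using only `≤` probability bounds. -/
def LiveF.strict : LiveF AP → Prop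
  | .tt => True
  | .ff => True
  | .atom _ => True
  | .natom _ => True
  | .and φ ψ => φ.strict ∧ ψ.strict
  | .or φ ψ => φ.strict ∧ ψ.strict
  | .nnextLt _ _ _ _ => False
  | .nnextLe _ _ _ ψ => ψ.strict
  | .nuntilLt _ _ _ _ _ => False
  | .nuntilLe _ _ _ ψ1 ψ2 => ψ1.strict ∧ ψ2.strict
end

/-- An equivalence relation is compatible with an MDP if related states have equal labels. -/
def Compatible (M : MDP Q AP) (s : Setoid Q) : Prop :=
  ∀ q q', s.r q q' → M.label q = M.label q'

/-- The lifting of a sub-probability measure to the quotient: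
`[μ]([q]) = μ([q])`. -/
def SubProb.lift (s : Setoid Q) (μ : SubProb Q) : SubProb (Quotient s) where
  val := fun a => ∑ q, if Quotient.mk s q = a then μ.val q else 0
  nonneg := by
    intro a
    apply Finset.sum_nonneg
    intro q _
    split
    · exact μ.nonneg q
    · exact le_refl 0
  sum_le_one := by
    rw [Finset.sum_comm]
    simpa using μ.sum_le_one

/-- The abstract MDP of `M` with respect to an equivalence relation `s`. -/
def MDP.abst (M : MDP Q AP) (s : Setoid Q) : MDP (Quotient s) AP where
  init := Quotient.mk s M.init
  trans := fun a =>
    Finset.univ.biUnion fun q =>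
      if Quotient.mk s q = a then (M.trans q).image (SubProb.lift s) else ∅
  trans_nonempty := by
    intro a
    obtain ⟨q, rfl⟩ := Quotient.exists_rep a
    obtain ⟨μ, hμ⟩ := M.trans_nonempty q
    refine ⟨SubProb.lift s μ, Finset.mem_biUnion.2 ⟨q, Finset.mem_univ q, ?_⟩⟩
    rw [if_pos rfl]
    exact Finset.mem_image_of_mem _ hμ
  label := fun a => M.label a.out

/-- The abstraction relation `{(q, [q])}`. -/
def abstRel (s : Setoid Q) : Q → Quotient s → Prop := fun q a => Quotient.mk s q = a

/-- The refinement relation for `s' ⊆ s`: `[q]_{s'}` is related to `[q]_s` iff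
`[q]_{s'} ⊆ [q]_s`, equivalently they share a common element. -/
def refineRel (s' s : Setoid Q) : Quotient s' → Quotient s → Prop := fun a' a =>
  ∃ q : Q, Quotient.mk s' q = a' ∧ Quotient.mk s q = a

/-- `(E, R)` is a counterexample for the MDP `A` and safety formula `ψ`. -/
def IsCex {QA : Type v} [Fintype QA] (A : MDP QA AP) (ψ : SafeF AP) (E : MDP Q AP)
    (R : Q → QA → Prop) : Prop :=
  ¬ satS E ψ E.init ∧ IsCanonSim E A R

/-- Containment of MDPs (on a common state space): same initial state, same labels, and
each transition set injects into the corresponding one so that each transition agrees with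
its image except possibly being zero. -/
def MDPContained (M' M : MDP Q AP) : Prop :=
  M'.init = M.init ∧ (∀ q, M'.label q = M.label q) ∧
    ∀ q, ∃ f : SubProb Q → SubProb Q, Set.InjOn f (M'.trans q) ∧
      ∀ μ' ∈ M'.trans q, f μ' ∈ M.trans q ∧ ∀ q'', μ'.val q'' = (f μ').val q'' ∨ μ'.val q'' = 0

/-- A minimal counterexample. -/
def MinimalCex {QA : Type v} [Fintype QA] (A : MDP QA AP) (ψ : SafeF AP) (E : MDP Q AP)
    (R₀ : Q → QA → Prop) : Prop :=
  IsCex A ψ E R₀ ∧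
    (∀ (E₁ : MDP Q AP) (R₁ : Q → QA → Prop),
      IsCex A ψ E₁ R₁ → MDPContained E₁ E → E₁ = E) ∧
    (∀ R₁ : Q → QA → Prop,
      IsCex A ψ E R₁ → (∀ e a, R₁ e a → R₀ e a) → R₁ = R₀)

/-- The counterexample `(E, R₀)` for the abstraction `M/s` is valid and consistent with
`(M, s)`: there is a canonical (validating) simulation `R` of `E` by `M` with `α∘R ⊆ R₀`. -/
def ValidConsistent (M : MDP Q AP) (s : Setoid Q) {QE : Type v} [Fintype QE] (E : MDP QE AP)
    (R₀ : QE → Quotient s → Prop) : Prop :=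
  ∃ R : QE → Q → Prop, IsCanonSim E M R ∧ ∀ e q, R e q → R₀ e (Quotient.mk s q)

/-- The underlying graph of an MDP is a tree rooted at `r`. -/
def IsTreeGraph {V : Type u} (E : V → V → Prop) (r : V) : Prop :=
  (∀ q, ¬ E q r) ∧ (∀ q, q ≠ r → ∃! p, E p q) ∧ ∀ q, Relation.ReflTransGen E r q


/-!
Sets of states satisfying a liveness formula are upward closed under a simulation `R`, so by a
layer-cake decomposition `μ ≼_R μ'` compares the expectations of nonnegative `R`-monotone
functions. Value iteration then shows that the maximal probability of `s₁ U s₂` over all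
schedulers is `R`-monotone. This maximum is attained by a memoryless scheduler that takes
value-attaining actions moving closer to `s₂`, so whatever one scheduler achieves at `q` is
achieved by some scheduler at `q'`. The next-operators are the one-step case of the same
comparison.
-/

theorem rclosed_setOf_of_imp {α : Type*} {R : α → α → Prop} (hR : Reflexive R) {P : α → Prop}
    (hP : ∀ a b, R a b → P a → P b) : RClosed R {a | P a} :=
  Set.Subset.antisymm (fun _ ⟨a, ha, hab⟩ => hP a _ hab ha) fun a ha => ⟨a, ha, hR a⟩

theorem RClosed.mem_of_rel {α : Type*} {R : α → α → Prop} {A : Set α} (hA : RClosed R A)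
    {a b : α} (ha : a ∈ A) (hab : R a b) : b ∈ A :=
  hA ▸ ⟨a, ha, hab⟩

namespace SubProb

def expect (μ : SubProb Q) (g : Q → ℝ) : ℝ := ∑ q, μ.val q * g q

variable (μ : SubProb Q) {g g' : Q → ℝ}

theorem expect_mono (h : ∀ q, g q ≤ g' q) : μ.expect g ≤ μ.expect g' :=
  Finset.sum_le_sum fun q _ => mul_le_mul_of_nonneg_left (h q) (μ.nonneg q)

theorem expect_nonneg (h : ∀ q, 0 ≤ g q) : 0 ≤ μ.expect g :=
  Finset.sum_nonneg fun q _ => mul_nonneg (μ.nonneg q) (h q)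

theorem expect_sub : μ.expect (g - g') = μ.expect g - μ.expect g' := by
  simp only [expect, Pi.sub_apply, mul_sub, Finset.sum_sub_distrib]

theorem expect_le_of_forall_pos {K : ℝ} (hK : 0 ≤ K) (h : ∀ q, 0 < μ.val q → g q ≤ K) :
    μ.expect g ≤ K :=
  calc μ.expect g ≤ ∑ q, μ.val q * K := Finset.sum_le_sum fun q _ => by
        rcases (μ.nonneg q).eq_or_lt with hq | hq
        · simp [← hq]
        · exact mul_le_mul_of_nonneg_left (h q hq) hq.le
    _ = (∑ q, μ.val q) * K := Finset.sum_mul .. |>.symm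
    _ ≤ K := mul_le_of_le_one_left hK μ.sum_le_one

theorem eq_of_le_expect {m : ℝ} (hm : 0 < m) (hle : ∀ q, 0 < μ.val q → g q ≤ m)
    (hge : m ≤ μ.expect g) {q : Q} (hq : 0 < μ.val q) : g q = m := by
  have hterm : ∀ c ∈ Finset.univ, 0 ≤ μ.val c * (m - g c) := fun c _ => by
    rcases (μ.nonneg c).eq_or_lt with hc | hc
    · simp [← hc]
    · exact mul_nonneg hc.le (sub_nonneg.2 (hle c hc))
  have hsum : ∑ c, μ.val c * (m - g c) = 0 := by
    refine le_antisymm ?_ (Finset.sum_nonneg hterm)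
    have : ∑ c, μ.val c * (m - g c) = (∑ c, μ.val c) * m - μ.expect g := by
      simp only [expect, mul_sub, Finset.sum_sub_distrib, Finset.sum_mul]
    nlinarith [μ.sum_le_one]
  have := (Finset.sum_eq_zero_iff_of_nonneg hterm).1 hsum q (Finset.mem_univ q)
  rcases mul_eq_zero.1 this with h | h
  · exact absurd h hq.ne'
  · linarith

theorem expect_ciSup {f : ℕ → Q → ℝ} (hf : ∀ q, Monotone (f · q))
    (hbdd : ∀ q, BddAbove (Set.range (f · q))) :
    μ.expect (fun q => ⨆ n, f n q) = ⨆ n, μ.expect (f n) := by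
  have hlim : Filter.Tendsto (fun n => μ.expect (f n)) Filter.atTop
      (nhds (μ.expect fun q => ⨆ n, f n q)) :=
    tendsto_finsetSum _ fun q _ => (tendsto_atTop_ciSup (hf q) (hbdd q)).const_mul _
  have hmono : Monotone fun n => μ.expect (f n) := fun _ _ hab => μ.expect_mono (hf · hab)
  have hbdd' : BddAbove (Set.range fun n => μ.expect (f n)) := by
    refine ⟨μ.expect fun q => ⨆ n, f n q, ?_⟩
    rintro _ ⟨n, rfl⟩
    exact hmono.ge_of_tendsto hlim n
  exact tendsto_nhds_unique hlim (tendsto_atTop_ciSup hmono hbdd')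

theorem expect_eq_mul_mass_add {ε : ℝ} (hg : ∀ q, 0 ≤ g q) (hε0 : 0 ≤ ε)
    (hε : ∀ q, 0 < g q → ε ≤ g q) :
    μ.expect g = ε * μ.mass {q | 0 < g q} + μ.expect fun q => max (g q - ε) 0 := by
  simp only [expect, mass, Finset.mul_sum, ← Finset.sum_add_distrib]
  refine Finset.sum_congr rfl fun q _ => ?_
  rcases (hg q).eq_or_lt with hq | hq
  · simp [← hq, hε0]
  · simp [hq, max_eq_left (sub_nonneg.2 (hε q hq))]
    ring

theorem expect_le_expect_of_simLE {R : Q → Q → Prop} (hR : Reflexive R) {μ μ' : SubProb Q}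
    (h : μ.simLE R μ') {g : Q → ℝ} (hg : ∀ q, 0 ≤ g q) (hmono : ∀ a b, R a b → g a ≤ g b) :
    μ.expect g ≤ μ'.expect g := by
  set S := Finset.univ.filter (0 < g ·)
  rcases S.eq_empty_or_nonempty with hS | hS
  · have hg0 : ∀ q, g q = 0 := fun q =>
      le_antisymm (not_lt.1 (Finset.filter_eq_empty_iff.1 hS (Finset.mem_univ q))) (hg q)
    simp [expect, hg0]
  obtain ⟨q₀, hq₀, hmin⟩ := S.exists_min_image g hS
  have hε : ∀ q, 0 < g q → g q₀ ≤ g q := fun q hq => hmin q (by simp [S, hq])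
  have hq₀pos : 0 < g q₀ := (Finset.mem_filter.1 hq₀).2
  have hmass : μ.mass {q | 0 < g q} ≤ μ'.mass {q | 0 < g q} :=
    h _ (rclosed_setOf_of_imp hR fun a b hab (ha : 0 < g a) => ha.trans_le (hmono a b hab))
  rw [μ.expect_eq_mul_mass_add hg hq₀pos.le hε, μ'.expect_eq_mul_mass_add hg hq₀pos.le hε]
  exact add_le_add (mul_le_mul_of_nonneg_left hmass hq₀pos.le)
    (expect_le_expect_of_simLE hR h (fun q => le_max_right _ _)
      fun a b hab => max_le_max (sub_le_sub_right (hmono a b hab) _) le_rfl)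
termination_by (Finset.univ.filter (0 < g ·)).card
decreasing_by
  refine Finset.card_lt_card ⟨fun q hq => ?_, fun hsub => ?_⟩
  · simp only [Finset.mem_filter, Finset.mem_univ, true_and, lt_max_iff, lt_irrefl, or_false,
      sub_pos] at hq
    simpa using hq₀pos.trans hq
  · simpa using hsub hq₀

end SubProb

section MaxUntilProb

variable (M : MDP Q AP) (s1 s2 : Set Q)

def maxUntilProbN : ℕ → Q → ℝ
  | 0, q => if q ∈ s2 then 1 else 0
  | n + 1, q =>
    if q ∈ s2 then 1
    else if q ∈ s1 then
      (M.trans q).sup' (M.trans_nonempty q) fun μ => μ.expect (maxUntilProbN n)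
    else 0

def maxUntilProb (q : Q) : ℝ := ⨆ n, maxUntilProbN M s1 s2 n q

theorem maxUntilProbN_succ_of_mem {n : ℕ} {q : Q} (h1 : q ∈ s1) (h2 : q ∉ s2) :
    maxUntilProbN M s1 s2 (n + 1) q =
      (M.trans q).sup' (M.trans_nonempty q) fun μ => μ.expect (maxUntilProbN M s1 s2 n) := by
  simp [maxUntilProbN, h1, h2]

theorem expect_le_maxUntilProbN_succ {n : ℕ} {q : Q} (h1 : q ∈ s1) (h2 : q ∉ s2) {μ : SubProb Q}
    (hμ : μ ∈ M.trans q) : μ.expect (maxUntilProbN M s1 s2 n) ≤ maxUntilProbN M s1 s2 (n + 1) q :=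
  maxUntilProbN_succ_of_mem M s1 s2 h1 h2 ▸
    Finset.le_sup' (fun ν : SubProb Q => ν.expect (maxUntilProbN M s1 s2 n)) hμ

theorem maxUntilProbN_nonneg (n : ℕ) (q : Q) : 0 ≤ maxUntilProbN M s1 s2 n q := by
  induction n generalizing q with
  | zero => simp only [maxUntilProbN]; split <;> norm_num
  | succ n ih =>
    by_cases h2 : q ∈ s2
    · simp [maxUntilProbN, h2]
    by_cases h1 : q ∈ s1
    · obtain ⟨μ, hμ⟩ := M.trans_nonempty q
      exact (μ.expect_nonneg ih).trans (expect_le_maxUntilProbN_succ M s1 s2 h1 h2 hμ)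
    · simp [maxUntilProbN, h1, h2]

theorem maxUntilProbN_le_one (n : ℕ) (q : Q) : maxUntilProbN M s1 s2 n q ≤ 1 := by
  induction n generalizing q with
  | zero => simp only [maxUntilProbN]; split <;> norm_num
  | succ n ih =>
    simp only [maxUntilProbN]
    split_ifs
    · exact le_rfl
    · exact Finset.sup'_le _ _ fun μ _ => μ.expect_le_of_forall_pos zero_le_one fun c _ => ih c
    · exact zero_le_one

theorem maxUntilProbN_le_succ (n : ℕ) (q : Q) :
    maxUntilProbN M s1 s2 n q ≤ maxUntilProbN M s1 s2 (n + 1) q := by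
  induction n generalizing q with
  | zero =>
    by_cases h2 : q ∈ s2
    · simp [maxUntilProbN, h2]
    · simpa [maxUntilProbN, h2] using maxUntilProbN_nonneg M s1 s2 1 q
  | succ n ih =>
    simp only [maxUntilProbN]
    split_ifs
    · exact le_rfl
    · exact Finset.sup'_mono_fun fun μ _ => μ.expect_mono ih
    · exact le_rfl

theorem monotone_maxUntilProbN (q : Q) : Monotone (maxUntilProbN M s1 s2 · q) :=
  monotone_nat_of_le_succ fun n => maxUntilProbN_le_succ M s1 s2 n q

theorem bddAbove_range_maxUntilProbN (q : Q) :
    BddAbove (Set.range (maxUntilProbN M s1 s2 · q)) :=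
  ⟨1, Set.forall_mem_range.2 fun n => maxUntilProbN_le_one M s1 s2 n q⟩

theorem maxUntilProbN_le_maxUntilProb (n : ℕ) (q : Q) :
    maxUntilProbN M s1 s2 n q ≤ maxUntilProb M s1 s2 q :=
  le_ciSup (bddAbove_range_maxUntilProbN M s1 s2 q) n

theorem maxUntilProb_nonneg (q : Q) : 0 ≤ maxUntilProb M s1 s2 q :=
  (maxUntilProbN_nonneg M s1 s2 0 q).trans (maxUntilProbN_le_maxUntilProb M s1 s2 0 q)

theorem maxUntilProb_le_one (q : Q) : maxUntilProb M s1 s2 q ≤ 1 :=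
  ciSup_le fun n => maxUntilProbN_le_one M s1 s2 n q

theorem maxUntilProb_eq_one {q : Q} (h : q ∈ s2) : maxUntilProb M s1 s2 q = 1 :=
  (maxUntilProb_le_one M s1 s2 q).antisymm <| by
    simpa [maxUntilProbN, h] using maxUntilProbN_le_maxUntilProb M s1 s2 0 q

theorem mem_or_mem_of_maxUntilProb_pos {q : Q} (h : 0 < maxUntilProb M s1 s2 q) :
    q ∈ s1 ∨ q ∈ s2 := by
  by_contra! hq
  have : ∀ n, maxUntilProbN M s1 s2 n q = 0 := by
    rintro (_ | _) <;> simp [maxUntilProbN, hq.1, hq.2]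
  simp [maxUntilProb, this] at h

theorem expect_maxUntilProb_le {q : Q} (h1 : q ∈ s1) (h2 : q ∉ s2) {μ : SubProb Q}
    (hμ : μ ∈ M.trans q) : μ.expect (maxUntilProb M s1 s2) ≤ maxUntilProb M s1 s2 q := by
  change μ.expect (fun c => ⨆ n, maxUntilProbN M s1 s2 n c) ≤ _
  rw [μ.expect_ciSup (monotone_maxUntilProbN M s1 s2) (bddAbove_range_maxUntilProbN M s1 s2)]
  exact ciSup_le fun n => (expect_le_maxUntilProbN_succ M s1 s2 h1 h2 hμ).trans
    (maxUntilProbN_le_maxUntilProb M s1 s2 (n + 1) q)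

theorem maxUntilProb_le_of_superSolution {W : Q → ℝ} (hW0 : ∀ q, 0 ≤ W q)
    (hW2 : ∀ q ∈ s2, 1 ≤ W q)
    (hW1 : ∀ q ∈ s1, q ∉ s2 → ∀ μ ∈ M.trans q, μ.expect W ≤ W q) (q : Q) :
    maxUntilProb M s1 s2 q ≤ W q := by
  refine ciSup_le fun n => ?_
  induction n generalizing q with
  | zero =>
    simp only [maxUntilProbN]
    split_ifs with h2
    exacts [hW2 q h2, hW0 q]
  | succ n ih =>
    simp only [maxUntilProbN]
    split_ifs with h2 h1
    · exact hW2 q h2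
    · exact Finset.sup'_le _ _ fun μ hμ => (μ.expect_mono ih).trans (hW1 q h1 h2 μ hμ)
    · exact hW0 q

theorem untilProbN_nonneg (σ : Sched M) (n : ℕ) (h : List Q) (q : Q) :
    0 ≤ untilProbN M σ s1 s2 n h q := by
  induction n generalizing h q with
  | zero => simp only [untilProbN]; split <;> norm_num
  | succ n ih =>
    simp only [untilProbN]
    split_ifs
    exacts [zero_le_one, (σ.choice h q).expect_nonneg (ih _), le_rfl]

theorem untilProbN_le_succ (σ : Sched M) (n : ℕ) (h : List Q) (q : Q) :
    untilProbN M σ s1 s2 n h q ≤ untilProbN M σ s1 s2 (n + 1) h q := by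
  induction n generalizing h q with
  | zero =>
    by_cases h2 : q ∈ s2
    · simp [untilProbN, h2]
    · simpa [untilProbN, h2] using untilProbN_nonneg M s1 s2 σ 1 h q
  | succ n ih =>
    simp only [untilProbN]
    split_ifs
    exacts [le_rfl, (σ.choice h q).expect_mono (ih _), le_rfl]

theorem untilProbN_le_maxUntilProbN (σ : Sched M) (n : ℕ) (h : List Q) (q : Q) :
    untilProbN M σ s1 s2 n h q ≤ maxUntilProbN M s1 s2 n q := by
  induction n generalizing h q with
  | zero => exact le_rfl
  | succ n ih =>
    simp only [untilProbN]
    split_ifs with h2 h1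
    · simp [maxUntilProbN, h2]
    · exact ((σ.choice h q).expect_mono (ih _)).trans
        (expect_le_maxUntilProbN_succ M s1 s2 h1 h2 (σ.valid h q))
    · exact maxUntilProbN_nonneg M s1 s2 _ q

theorem untilProb_le_maxUntilProb (σ : Sched M) (q : Q) :
    untilProb M σ s1 s2 q ≤ maxUntilProb M s1 s2 q :=
  ciSup_le fun n => (untilProbN_le_maxUntilProbN M s1 s2 σ n [] q).trans
    (maxUntilProbN_le_maxUntilProb M s1 s2 n q)

end MaxUntilProb

section Simulation

variable (M : MDP Q AP) (s1 s2 : Set Q) {R : Q → Q → Prop}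

theorem maxUntilProbN_le_of_isSimulation (hR : IsSimulation M R) (hc1 : RClosed R s1)
    (hc2 : RClosed R s2) (n : ℕ) {a b : Q} (hab : R a b) :
    maxUntilProbN M s1 s2 n a ≤ maxUntilProbN M s1 s2 n b := by
  by_cases ha2 : a ∈ s2
  · have hb2 := hc2.mem_of_rel ha2 hab
    cases n <;> simp [maxUntilProbN, ha2, hb2]
  cases n with
  | zero => simpa [maxUntilProbN, ha2] using maxUntilProbN_nonneg M s1 s2 0 b
  | succ n =>
    by_cases ha1 : a ∉ s1
    · simpa [maxUntilProbN, ha1, ha2] using maxUntilProbN_nonneg M s1 s2 (n + 1) b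
    have hb1 := hc1.mem_of_rel (not_not.1 ha1) hab
    by_cases hb2 : b ∈ s2
    · simpa [maxUntilProbN, hb2] using maxUntilProbN_le_one M s1 s2 (n + 1) a
    rw [maxUntilProbN_succ_of_mem M s1 s2 (not_not.1 ha1) ha2]
    refine Finset.sup'_le _ _ fun μ hμ => ?_
    obtain ⟨μ', hμ', hsim⟩ := (hR.2.2 a b hab).2 μ hμ
    exact (SubProb.expect_le_expect_of_simLE hR.1 hsim (maxUntilProbN_nonneg M s1 s2 n)
      fun _ _ => maxUntilProbN_le_of_isSimulation hR hc1 hc2 n).trans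
      (expect_le_maxUntilProbN_succ M s1 s2 hb1 hb2 hμ')

theorem maxUntilProb_le_of_isSimulation (hR : IsSimulation M R) (hc1 : RClosed R s1)
    (hc2 : RClosed R s2) {a b : Q} (hab : R a b) :
    maxUntilProb M s1 s2 a ≤ maxUntilProb M s1 s2 b :=
  ciSup_le fun n => (maxUntilProbN_le_of_isSimulation M s1 s2 hR hc1 hc2 n hab).trans
    (maxUntilProbN_le_maxUntilProb M s1 s2 n b)

end Simulation

theorem MDP.exists_pos_expect_le_sub (M : MDP Q AP) (g F : Q → ℝ) :
    ∃ δ > 0, ∀ q, ∀ μ ∈ M.trans q, μ.expect g < F q → μ.expect g ≤ F q - δ := by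
  set T := (Finset.univ.sigma M.trans).filter fun x => x.2.expect g < F x.1
  have hmem : ∀ q, ∀ μ ∈ M.trans q, μ.expect g < F q → (⟨q, μ⟩ : Σ _, SubProb Q) ∈ T :=
    fun q μ hμ hlt => Finset.mem_filter.2 ⟨Finset.mem_sigma.2 ⟨Finset.mem_univ q, hμ⟩, hlt⟩
  rcases T.eq_empty_or_nonempty with hT | hT
  · exact ⟨1, one_pos, fun q μ hμ hlt => absurd (hmem q μ hμ hlt) (hT ▸ Finset.notMem_empty _)⟩
  obtain ⟨x, hx, hmin⟩ := T.exists_min_image (fun x => F x.1 - x.2.expect g) hT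
  refine ⟨F x.1 - x.2.expect g, sub_pos.2 (Finset.mem_filter.1 hx).2, fun q μ hμ hlt => ?_⟩
  linarith [hmin _ (hmem q μ hμ hlt)]

def Sched.memoryless {M : MDP Q AP} (f : Q → SubProb Q) (hf : ∀ q, f q ∈ M.trans q) :
    Sched M :=
  ⟨fun _ q => f q, fun _ q => hf q⟩

section Attainment

variable (M : MDP Q AP) (s1 s2 : Set Q)

theorem bddAbove_range_untilProbN (σ : Sched M) (h : List Q) (q : Q) :
    BddAbove (Set.range (untilProbN M σ s1 s2 · h q)) :=
  ⟨1, Set.forall_mem_range.2 fun n => (untilProbN_le_maxUntilProbN M s1 s2 σ n h q).trans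
    (maxUntilProbN_le_one M s1 s2 n q)⟩

theorem untilProbN_le_untilProb (σ : Sched M) (n : ℕ) (q : Q) :
    untilProbN M σ s1 s2 n [] q ≤ untilProb M σ s1 s2 q :=
  le_ciSup (bddAbove_range_untilProbN M s1 s2 σ [] q) n

theorem untilProb_nonneg (σ : Sched M) (q : Q) : 0 ≤ untilProb M σ s1 s2 q :=
  (untilProbN_nonneg M s1 s2 σ 0 [] q).trans (untilProbN_le_untilProb M s1 s2 σ 0 q)

theorem one_le_untilProb (σ : Sched M) {q : Q} (h : q ∈ s2) : 1 ≤ untilProb M σ s1 s2 q := by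
  simpa [untilProbN, h] using untilProbN_le_untilProb M s1 s2 σ 0 q

theorem untilProbN_memoryless {f : Q → SubProb Q} (hf : ∀ q, f q ∈ M.trans q) (n : ℕ)
    (h h' : List Q) (q : Q) :
    untilProbN M (Sched.memoryless f hf) s1 s2 n h q =
      untilProbN M (Sched.memoryless f hf) s1 s2 n h' q := by
  induction n generalizing h h' q with
  | zero => rfl
  | succ n ih => simp only [untilProbN, ih (h ++ [q]) (h' ++ [q])]; rfl

theorem expect_untilProb_memoryless_le {f : Q → SubProb Q} (hf : ∀ q, f q ∈ M.trans q) {q : Q}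
    (h1 : q ∈ s1) (h2 : q ∉ s2) :
    (f q).expect (untilProb M (Sched.memoryless f hf) s1 s2) ≤
      untilProb M (Sched.memoryless f hf) s1 s2 q := by
  set σ := Sched.memoryless f hf
  change (f q).expect (fun c => ⨆ n, untilProbN M σ s1 s2 n [] c) ≤ _
  rw [(f q).expect_ciSup
    (fun c => monotone_nat_of_le_succ fun n => untilProbN_le_succ M s1 s2 σ n [] c)
    (bddAbove_range_untilProbN M s1 s2 σ [])]
  refine ciSup_le fun n => le_of_eq_of_le ?_ (untilProbN_le_untilProb M s1 s2 σ (n + 1) q)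
  simp only [untilProbN, h1, h2, if_true, if_false]
  exact Finset.sum_congr rfl fun c _ => by rw [untilProbN_memoryless M s1 s2 hf n [] [q]]; rfl

def optReachWithin : ℕ → Set Q
  | 0 => s2
  | n + 1 => {q | ∃ μ ∈ M.trans q, maxUntilProb M s1 s2 q ≤ μ.expect (maxUntilProb M s1 s2) ∧
      ∃ c, 0 < μ.val c ∧ c ∈ optReachWithin n}

theorem not_reach_and_eq_of_expect_ge {m : ℝ} (hm : 0 < m)
    (hle : ∀ c, (¬ ∃ n, c ∈ optReachWithin M s1 s2 n) → maxUntilProb M s1 s2 c ≤ m) {c : Q}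
    (hc : ¬ ∃ n, c ∈ optReachWithin M s1 s2 n) (hcm : maxUntilProb M s1 s2 c = m)
    {μ : SubProb Q} (hμ : μ ∈ M.trans c) (hopt : m ≤ μ.expect (maxUntilProb M s1 s2))
    {d : Q} (hd : 0 < μ.val d) :
    (¬ ∃ n, d ∈ optReachWithin M s1 s2 n) ∧ maxUntilProb M s1 s2 d = m := by
  have hnG : ∀ d, 0 < μ.val d → ¬ ∃ n, d ∈ optReachWithin M s1 s2 n := fun d hd ⟨n, hn⟩ =>
    hc ⟨n + 1, μ, hμ, hcm ▸ hopt, d, hd, hn⟩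
  exact ⟨hnG d hd, μ.eq_of_le_expect hm (fun d hd => hle d (hnG d hd)) hopt hd⟩

/-- Among the states that never reach `s2` optimally, those of maximal value `m > 0` form a trap
for optimal actions, while every other action loses a uniform `δ`; so their value is `≤ m - δ`. -/
theorem exists_mem_optReachWithin {q : Q} (hq : 0 < maxUntilProb M s1 s2 q) :
    ∃ n, q ∈ optReachWithin M s1 s2 n := by
  by_contra hq0
  set V := maxUntilProb M s1 s2
  set G := fun c => ∃ n, c ∈ optReachWithin M s1 s2 n
  obtain ⟨q₀, hq₀, hmax⟩ :=
    (Finset.univ.filter (¬ G ·)).exists_max_image V ⟨q, by simpa [G] using hq0⟩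
  set m := V q₀
  have hleV : ∀ c, ¬ G c → V c ≤ m := fun c hc => hmax c (by simpa [G] using hc)
  have hm : 0 < m := hq.trans_le (hleV q hq0)
  set A : Set Q := {c | ¬ G c ∧ V c = m}
  obtain ⟨δ, hδ, hgap⟩ := M.exists_pos_expect_le_sub V V
  set W : Q → ℝ := fun c => if c ∈ A then m - min δ m else V c
  have hWA : ∀ c ∈ A, W c = m - min δ m := fun c hc => if_pos hc
  have hWnA : ∀ c ∉ A, W c = V c := fun c hc => if_neg hc
  have hmδ : 0 ≤ m - min δ m := sub_nonneg.2 (min_le_right δ m)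
  have hWV : ∀ c, W c ≤ V c := fun c => by
    by_cases hc : c ∈ A
    · rw [hWA c hc, hc.2]; linarith [lt_min hδ hm]
    · exact (hWnA c hc).le
  have hsuper : ∀ c ∈ s1, c ∉ s2 → ∀ μ ∈ M.trans c, μ.expect W ≤ W c := by
    intro c h1 h2 μ hμ
    have hμV : μ.expect W ≤ μ.expect V := μ.expect_mono hWV
    by_cases hcA : c ∈ A
    swap
    · exact hμV.trans ((expect_maxUntilProb_le M s1 s2 h1 h2 hμ).trans_eq (hWnA c hcA).symm)
    rw [hWA c hcA]
    by_cases hopt : V c ≤ μ.expect V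
    · exact μ.expect_le_of_forall_pos hmδ fun d hd => (hWA d
        (not_reach_and_eq_of_expect_ge M s1 s2 hm hleV hcA.1 hcA.2 hμ (hcA.2 ▸ hopt) hd)).le
    · have := hgap c μ hμ (not_le.1 hopt)
      rw [hcA.2] at this
      linarith [min_le_left δ m]
  have hW0 : ∀ c, 0 ≤ W c := fun c => by
    by_cases hc : c ∈ A
    · exact (hWA c hc).symm ▸ hmδ
    · exact (hWnA c hc).symm ▸ maxUntilProb_nonneg M s1 s2 c
  have hW2 : ∀ c ∈ s2, 1 ≤ W c := fun c hc => by
    rw [hWnA c fun hcA => hcA.1 ⟨0, hc⟩]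
    exact (maxUntilProb_eq_one M s1 s2 hc).ge
  have := maxUntilProb_le_of_superSolution M s1 s2 hW0 hW2 hsuper q₀
  rw [hWA q₀ ⟨by simpa [G] using hq₀, rfl⟩] at this
  linarith [lt_min hδ hm]

def optRank (q : Q) : ℕ := if h : ∃ n, q ∈ optReachWithin M s1 s2 n then Nat.find h else 0

theorem exists_optRank_lt {q : Q} (hq : 0 < maxUntilProb M s1 s2 q) (h2 : q ∉ s2) :
    ∃ μ ∈ M.trans q, maxUntilProb M s1 s2 q ≤ μ.expect (maxUntilProb M s1 s2) ∧
      ∃ c, 0 < μ.val c ∧ optRank M s1 s2 c < optRank M s1 s2 q := by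
  have hG := exists_mem_optReachWithin M s1 s2 hq
  have hspec := Nat.find_spec hG
  obtain ⟨k, hk⟩ := Nat.exists_eq_succ_of_ne_zero (n := Nat.find hG) fun h0 => by
    rw [h0] at hspec
    exact h2 hspec
  rw [hk] at hspec
  obtain ⟨μ, hμ, hopt, c, hc, hcG⟩ := hspec
  refine ⟨μ, hμ, hopt, c, hc, ?_⟩
  rw [optRank, optRank, dif_pos ⟨k, hcG⟩, dif_pos hG, hk]
  exact Nat.lt_succ_of_le (Nat.find_min' _ hcG)

/-- Following a value-attaining action that decreases `optRank` is optimal: a state maximising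
`maxUntilProb - untilProb` with minimal rank would pass the maximum on to a state of lower rank. -/
theorem exists_sched_maxUntilProb_le :
    ∃ σ : Sched M, ∀ q, maxUntilProb M s1 s2 q ≤ untilProb M σ s1 s2 q := by
  set V := maxUntilProb M s1 s2
  have hgood : ∀ q, ∃ μ ∈ M.trans q, 0 < V q → q ∉ s2 →
      V q ≤ μ.expect V ∧ ∃ c, 0 < μ.val c ∧ optRank M s1 s2 c < optRank M s1 s2 q := fun q =>
    if h : 0 < V q ∧ q ∉ s2 then
      (exists_optRank_lt M s1 s2 h.1 h.2).imp fun _ ⟨hμ, hspec⟩ => ⟨hμ, fun _ _ => hspec⟩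
    else (M.trans_nonempty q).imp fun _ hμ => ⟨hμ, fun h1 h2 => absurd ⟨h1, h2⟩ h⟩
  choose pick hpick_mem hpick using hgood
  set σ := Sched.memoryless pick hpick_mem
  refine ⟨σ, fun q => not_lt.1 fun hq => ?_⟩
  set d := V - untilProb M σ s1 s2
  obtain ⟨q₀, -, hmax⟩ := Finset.univ.exists_max_image d ⟨q, Finset.mem_univ q⟩
  have hm : 0 < d q₀ := (sub_pos.2 hq).trans_le (hmax q (Finset.mem_univ q))
  obtain ⟨qs, hqs, hmin⟩ :=
    (Finset.univ.filter (d · = d q₀)).exists_min_image (optRank M s1 s2) ⟨q₀, by simp⟩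
  replace hqs : V qs - untilProb M σ s1 s2 qs = d q₀ := (Finset.mem_filter.1 hqs).2
  have hVpos : 0 < V qs := by linarith [untilProb_nonneg M s1 s2 σ qs]
  have h2 : qs ∉ s2 := fun h2 => by
    linarith [maxUntilProb_le_one M s1 s2 qs, one_le_untilProb M s1 s2 σ h2]
  have h1 := (mem_or_mem_of_maxUntilProb_pos M s1 s2 hVpos).resolve_right h2
  obtain ⟨hopt, c, hc, hrank⟩ := hpick qs hVpos h2
  have hge : d q₀ ≤ (pick qs).expect d := by
    rw [SubProb.expect_sub]
    linarith [expect_untilProb_memoryless_le M s1 s2 hpick_mem h1 h2]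
  have hc_eq := (pick qs).eq_of_le_expect hm (fun c _ => hmax c (Finset.mem_univ c)) hge hc
  exact hrank.not_ge (hmin c (by simpa using hc_eq))

end Attainment

section Preservation

variable {M : MDP Q AP} {R : Q → Q → Prop}

theorem forall_mass_of_isSimulation (hR : IsSimulation M R) {φ : Q → Prop}
    (hφ : ∀ a b, R a b → φ a → φ b) {a b : Q} (hab : R a b) {P : ℝ → Prop}
    (hP : ∀ x y, x ≤ y → P y → P x) (hb : ∀ μ ∈ M.trans b, P (μ.mass {c | φ c})) :
    ∀ μ ∈ M.trans a, P (μ.mass {c | φ c}) := fun μ hμ =>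
  let ⟨μ', hμ', hsim⟩ := (hR.2.2 a b hab).2 μ hμ
  hP _ _ (hsim _ (rclosed_setOf_of_imp hR.1 hφ)) (hb μ' hμ')

theorem forall_untilProb_of_isSimulation (hR : IsSimulation M R) {φ₁ φ₂ : Q → Prop}
    (hφ₁ : ∀ a b, R a b → φ₁ a → φ₁ b) (hφ₂ : ∀ a b, R a b → φ₂ a → φ₂ b) {a b : Q}
    (hab : R a b) {P : ℝ → Prop} (hP : ∀ x y, x ≤ y → P y → P x)
    (hb : ∀ σ, P (untilProb M σ {c | φ₁ c} {c | φ₂ c} b)) :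
    ∀ σ, P (untilProb M σ {c | φ₁ c} {c | φ₂ c} a) := fun σ =>
  let ⟨σ', hσ'⟩ := exists_sched_maxUntilProb_le M {c | φ₁ c} {c | φ₂ c}
  hP _ _ ((untilProb_le_maxUntilProb M _ _ σ a).trans
    ((maxUntilProb_le_of_isSimulation M _ _ hR (rclosed_setOf_of_imp hR.1 hφ₁)
      (rclosed_setOf_of_imp hR.1 hφ₂) hab).trans (hσ' b))) (hb σ')

theorem satL_of_isSimulation (hR : IsSimulation M R) :
    ∀ (ψ : LiveF AP) {a b : Q}, R a b → satL M ψ a → satL M ψ b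
  | .tt, _, _, _, h => h
  | .ff, _, _, _, h => h
  | .atom p, a, b, hab, h => show p ∈ M.label b from (hR.2.2 a b hab).1 ▸ h
  | .natom p, a, b, hab, h => show p ∉ M.label b from (hR.2.2 a b hab).1 ▸ h
  | .and φ ψ, _, _, hab, h =>
    ⟨satL_of_isSimulation hR φ hab h.1, satL_of_isSimulation hR ψ hab h.2⟩
  | .or φ ψ, _, _, hab, h =>
    h.imp (satL_of_isSimulation hR φ hab) (satL_of_isSimulation hR ψ hab)
  | .nnextLt _ _ _ ψ, _, _, hab, h => fun hb =>
    h (forall_mass_of_isSimulation hR (fun _ _ => satL_of_isSimulation hR ψ) hab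
      (fun _ _ => lt_of_le_of_lt) hb)
  | .nnextLe _ _ _ ψ, _, _, hab, h => fun hb =>
    h (forall_mass_of_isSimulation hR (fun _ _ => satL_of_isSimulation hR ψ) hab
      (fun _ _ => le_trans) hb)
  | .nuntilLt _ _ _ ψ₁ ψ₂, _, _, hab, h => fun hb =>
    h (forall_untilProb_of_isSimulation hR (fun _ _ => satL_of_isSimulation hR ψ₁)
      (fun _ _ => satL_of_isSimulation hR ψ₂) hab (fun _ _ => lt_of_le_of_lt) hb)
  | .nuntilLe _ _ _ ψ₁ ψ₂, _, _, hab, h => fun hb =>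
    h (forall_untilProb_of_isSimulation hR (fun _ _ => satL_of_isSimulation hR ψ₁)
      (fun _ _ => satL_of_isSimulation hR ψ₂) hab (fun _ _ => le_trans) hb)

theorem satS_of_isSimulation (hR : IsSimulation M R) :
    ∀ (ψ : SafeF AP) {a b : Q}, R a b → satS M ψ b → satS M ψ a
  | .tt, _, _, _, h => h
  | .ff, _, _, _, h => h
  | .atom p, a, b, hab, h => show p ∈ M.label a from (hR.2.2 a b hab).1 ▸ h
  | .natom p, a, b, hab, h => show p ∉ M.label a from (hR.2.2 a b hab).1 ▸ h
  | .and φ ψ, _, _, hab, h =>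
    ⟨satS_of_isSimulation hR φ hab h.1, satS_of_isSimulation hR ψ hab h.2⟩
  | .or φ ψ, _, _, hab, h =>
    h.imp (satS_of_isSimulation hR φ hab) (satS_of_isSimulation hR ψ hab)
  | .pnextLt _ _ _ ψ, _, _, hab, h =>
    forall_mass_of_isSimulation hR (fun _ _ => satL_of_isSimulation hR ψ) hab
      (fun _ _ => lt_of_le_of_lt) h
  | .pnextLe _ _ _ ψ, _, _, hab, h =>
    forall_mass_of_isSimulation hR (fun _ _ => satL_of_isSimulation hR ψ) hab
      (fun _ _ => le_trans) h
  | .puntilLt _ _ _ ψ₁ ψ₂, _, _, hab, h =>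
    forall_untilProb_of_isSimulation hR (fun _ _ => satL_of_isSimulation hR ψ₁)
      (fun _ _ => satL_of_isSimulation hR ψ₂) hab (fun _ _ => lt_of_le_of_lt) h
  | .puntilLe _ _ _ ψ₁ ψ₂, _, _, hab, h =>
    forall_untilProb_of_isSimulation hR (fun _ _ => satL_of_isSimulation hR ψ₁)
      (fun _ _ => satL_of_isSimulation hR ψ₂) hab (fun _ _ => le_trans) h

end Preservation

/-- Simulation preserves liveness and reflects safety: if `q ≼ q'` then every liveness
formula true at `q` is true at `q'`, and every safety formula true at `q'` is true at `q`. -/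
theorem stmt6 {Q : Type u} {AP : Type w} [Fintype Q] (M : MDP Q AP) (q q' : Q)
    (hsim : ∃ R : Q → Q → Prop, IsSimulation M R ∧ R q q') :
    (∀ ψL : LiveF AP, satL M ψL q → satL M ψL q') ∧
    (∀ ψS : SafeF AP, satS M ψS q' → satS M ψS q) := by
  obtain ⟨R, hR, hqq'⟩ := hsim
  exact ⟨fun ψ => satL_of_isSimulation hR ψ hqq', fun ψ => satS_of_isSimulation hR ψ hqq'⟩
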